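/- arXiv:1807.00614 — 2 statements merged into one kernel-verified Lean document; each statement's English description precedes it below -/
import Mathlib

section
/- Let A be a commutative semiring, V a finite type of propositional variables, α : V → Bool → A a labeling such that (+, α) is neutral, and C a circuit over V in d-DNNF (decomposable and deterministic). Then eval(C) = AMC(C), i.e. the bottom-up semiring evaluation of the circuit equals its algebraic model count ∑_{τ : V → Bool, τ satisfies C} ∏_{v : V} α v (τ v). -/
/-- NNF circuits over a type `V` of propositional variables: literals,
conjunctions and disjunctions. -/
inductive Circuit (V : Type*) where
  | lit : V → Bool → Circuit V
  | and : Circuit V → Circuit V → Circuit V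
  | or : Circuit V → Circuit V → Circuit V

namespace Circuit

/-- The set of variables occurring in a circuit. -/
def vars {V : Type*} : Circuit V → Set V
  | lit v _ => {v}
  | and c₁ c₂ => c₁.vars ∪ c₂.vars
  | or c₁ c₂ => c₁.vars ∪ c₂.vars

/-- Satisfaction of a circuit by an assignment `τ : V → Bool`. -/
def sat {V : Type*} : Circuit V → (V → Bool) → Bool
  | lit v s, τ => τ v == s
  | and c₁ c₂, τ => c₁.sat τ && c₂.sat τ
  | or c₁ c₂, τ => c₁.sat τ || c₂.sat τ

/-- A circuit is in d-DNNF if every conjunction is decomposable (the conjuncts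
mention disjoint sets of variables) and every disjunction is deterministic (no
assignment satisfies both disjuncts). -/
def dDNNF {V : Type*} : Circuit V → Prop
  | lit _ _ => True
  | and c₁ c₂ => Disjoint c₁.vars c₂.vars ∧ c₁.dDNNF ∧ c₂.dDNNF
  | or c₁ c₂ => (∀ τ : V → Bool, ¬(c₁.sat τ = true ∧ c₂.sat τ = true)) ∧
      c₁.dDNNF ∧ c₂.dDNNF

/-- Bottom-up semiring evaluation of a circuit with literal labels `α`. -/
def eval {V A : Type*} [CommSemiring A] (α : V → Bool → A) : Circuit V → A
  | lit v s => α v s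
  | and c₁ c₂ => c₁.eval α * c₂.eval α
  | or c₁ c₂ => c₁.eval α + c₂.eval α

end Circuit

/-! The algebraic model count is treated as a functional on Boolean functions and both sides
are compared by induction on the circuit: determinism makes the count additive over a
disjunction, and neutrality (all assignments together weigh `1`) makes it multiplicative over
a decomposable conjunction and reduces a literal to its label. -/

namespace Circuit

lemma dependsOn_sat {V : Type*} (c : Circuit V) : DependsOn c.sat c.vars := by
  intro τ σ h
  induction c with
  | lit v s => simp [sat, h v rfl]
  | and c₁ c₂ ih₁ ih₂ | or c₁ c₂ ih₁ ih₂ =>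
      simp only [sat, ih₁ fun v hv => h v (Or.inl hv), ih₂ fun v hv => h v (Or.inr hv)]

end Circuit

def swapOn {V : Type*} (s : Set V) [DecidablePred (· ∈ s)] :
    Equiv.Perm ((V → Bool) × (V → Bool)) :=
  Function.Involutive.toPerm (fun p => (s.piecewise p.1 p.2, s.piecewise p.2 p.1))
    fun p => by ext v <;> by_cases hv : v ∈ s <;> simp [hv]

@[simp]
lemma swapOn_apply {V : Type*} (s : Set V) [DecidablePred (· ∈ s)] (p : (V → Bool) × (V → Bool)) :
    swapOn s p = (s.piecewise p.1 p.2, s.piecewise p.2 p.1) :=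
  rfl

section AlgebraicModelCount

variable {V A : Type*} [Fintype V] [CommSemiring A]

lemma prod_piecewise_mul_prod_piecewise (α : V → Bool → A) (s : Set V) [DecidablePred (· ∈ s)]
    (τ σ : V → Bool) :
    (∏ v, α v (s.piecewise τ σ v)) * ∏ v, α v (s.piecewise σ τ v) =
      (∏ v, α v (τ v)) * ∏ v, α v (σ v) := by
  simp only [← Finset.prod_mul_distrib]
  refine Finset.prod_congr rfl fun v _ => ?_
  by_cases hv : v ∈ s <;> simp [hv, mul_comm]

variable [DecidableEq V]

def amc (α : V → Bool → A) (f : (V → Bool) → Bool) : A :=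
  ∑ τ : V → Bool, if f τ then ∏ v, α v (τ v) else 0

lemma sum_prod_eq_prod_add (β : V → Bool → A) :
    ∑ τ : V → Bool, ∏ v, β v (τ v) = ∏ v, (β v true + β v false) := by
  simp only [← Fintype.prod_sum, Fintype.sum_bool]

variable {α : V → Bool → A}

lemma sum_prod_eq_one (hα : ∀ v, α v true + α v false = 1) :
    ∑ τ : V → Bool, ∏ v, α v (τ v) = 1 := by
  simp [sum_prod_eq_prod_add, hα]

lemma amc_apply_beq (hα : ∀ v, α v true + α v false = 1) (v : V) (s : Bool) :
    amc α (fun τ => τ v == s) = α v s := by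
  -- zeroing the label of `(v, !s)` turns the indicator of `τ v = s` into a factor of the weight
  let β : V → Bool → A := fun w b => if w = v ∧ b ≠ s then 0 else α w b
  have hβ : ∀ τ : V → Bool,
      (if τ v == s then ∏ w, α w (τ w) else 0) = ∏ w, β w (τ w) := by
    intro τ
    by_cases hτ : τ v = s
    · simp only [hτ, beq_self_eq_true, if_true]
      refine Finset.prod_congr rfl fun w _ => ?_
      by_cases hw : w = v
      · subst hw; simp [β, hτ]
      · simp [β, hw]
    · simp only [beq_iff_eq, hτ, if_false]
      exact (Finset.prod_eq_zero (Finset.mem_univ v) (by simp [β, hτ])).symm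
  simp only [amc, hβ, sum_prod_eq_prod_add]
  rw [Finset.prod_eq_single v (fun w _ hw => by simp [β, hw, hα w]) (by simp)]
  cases s <;> simp [β]

lemma amc_or {f g : (V → Bool) → Bool} (hfg : ∀ τ, ¬(f τ = true ∧ g τ = true)) :
    amc α (fun τ => f τ || g τ) = amc α f + amc α g := by
  rw [amc, amc, amc, ← Finset.sum_add_distrib]
  refine Finset.sum_congr rfl fun τ _ => ?_
  cases hf : f τ <;> cases hg : g τ <;> simp_all

/-- Swapping two assignments on `s` preserves the product of their weights and turns a pair
(model of `f`, model of `g`) into a pair (model of `f && g`, arbitrary assignment); by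
neutrality the arbitrary assignment contributes a factor `1`. -/
lemma amc_and_of_dependsOn (hα : ∀ v, α v true + α v false = 1)
    {f g : (V → Bool) → Bool} {s : Set V} (hf : DependsOn f s) (hg : DependsOn g sᶜ) :
    amc α (fun τ => f τ && g τ) = amc α f * amc α g := by
  classical
  let w : (V → Bool) → A := fun τ => ∏ v, α v (τ v)
  let F : (V → Bool) × (V → Bool) → A := fun p => if f p.1 && g p.2 then w p.1 * w p.2 else 0
  have hswap : ∀ p, F (swapOn s p) = if f p.1 && g p.1 then w p.1 * w p.2 else 0 := by
    rintro ⟨τ, σ⟩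
    have hfτ : f (s.piecewise τ σ) = f τ := hf fun v hv => by simp [hv]
    have hgτ : g (s.piecewise σ τ) = g τ := hg fun v hv => by simp [Set.notMem_of_mem_compl hv]
    simp only [F, swapOn_apply, hfτ, hgτ, w, prod_piecewise_mul_prod_piecewise]
  calc amc α (fun τ => f τ && g τ)
      = ∑ τ, ∑ σ, if f τ && g τ then w τ * w σ else 0 := by
        refine Finset.sum_congr rfl fun τ _ => ?_
        split_ifs <;> simp [w, ← Finset.mul_sum, sum_prod_eq_one hα]
    _ = ∑ p, F (swapOn s p) := by rw [Fintype.sum_prod_type]; simp only [hswap]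
    _ = ∑ p, F p := Equiv.sum_comp _ F
    _ = amc α f * amc α g := by
        rw [Fintype.sum_prod_type, amc, amc, Finset.sum_mul_sum]
        refine Finset.sum_congr rfl fun τ _ => Finset.sum_congr rfl fun σ _ => ?_
        simp only [F, w, ite_zero_mul_ite_zero, Bool.and_eq_true]

lemma Circuit.eval_eq_amc_sat (hα : ∀ v, α v true + α v false = 1) {C : Circuit V}
    (hC : C.dDNNF) : C.eval α = amc α C.sat := by
  induction C with
  | lit v s => exact (amc_apply_beq hα v s).symm
  | and c₁ c₂ ih₁ ih₂ =>
      obtain ⟨hdisj, h₁, h₂⟩ := hC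
      rw [eval, ih₁ h₁, ih₂ h₂, ← amc_and_of_dependsOn hα c₁.dependsOn_sat
        (c₂.dependsOn_sat.mono hdisj.subset_compl_left)]
      rfl
  | or c₁ c₂ ih₁ ih₂ =>
      obtain ⟨hdet, h₁, h₂⟩ := hC
      rw [eval, ih₁ h₁, ih₂ h₂, ← amc_or hdet]
      rfl

end AlgebraicModelCount

/-- On a d-DNNF circuit, for a neutral pair `(+, α)`, the bottom-up evaluation
equals the algebraic model count. -/
theorem eval_eq_amc {V A : Type*} [Fintype V] [DecidableEq V] [CommSemiring A]
    (α : V → Bool → A) (hneutral : ∀ v : V, α v true + α v false = 1)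
    (C : Circuit V) (hC : C.dDNNF) :
    C.eval α =
      ∑ τ ∈ Finset.univ.filter (fun τ : V → Bool => C.sat τ = true),
        ∏ v : V, α v (τ v) := by
  rw [Finset.sum_filter]
  exact C.eval_eq_amc_sat hneutral hC
end

section
/- Define Ψ : (Fin N → ℝ) → ℝ≥0∞ by Ψ x = ∑ over all pairs (b, c) with b : J → Bool, c : K → Bool and φ b c = true of (∏_{j : J} w j (b j)) · ∏_{k : K} (if c k then Set.indicator (S k) 1 x else Set.indicator (S k)ᶜ 1 x). Then ∫⁻ x, Ψ x · ∏_{i : Fin N} f i (x i) ∂λ^N = WMI, i.e. the integral of the algebraic model count Ψ multiplied by the product of the densities equals the weighted model integral ∑_{b : J → Bool} ∫⁻ x in {x | φ b (fun k => decide (x ∈ S k)) = true}, (∏_{j : J} w j (b j)) · ∏_{i : Fin N} f i (x i) ∂λ^N. -/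
open MeasureTheory
open scoped ENNReal

/-!
At a point `x`, the product of indicators attached to `c : K → Bool` in the algebraic model count
`Ψ` is `1` exactly when `c` is the truth assignment `k ↦ (x ∈ S k)`, and `0` otherwise. Hence
`Ψ x` collapses to the sum of the weights of those `b` for which `φ b` holds at that assignment:
`Ψ` is a finite sum of weighted indicators of measurable sets, and integrating term by term
gives the weighted model integral.
-/

open Finset

open Classical in
noncomputable def boolAbstraction {α K : Type*} (S : K → Set α) (x : α) : K → Bool :=
  fun k => decide (x ∈ S k)

section

variable {α K : Type*}

theorem measurable_boolAbstraction [MeasurableSpace α] {S : K → Set α}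
    (hS : ∀ k, MeasurableSet (S k)) : Measurable (boolAbstraction S) :=
  measurable_pi_lambda _ fun k =>
    measurable_to_bool <| by simpa [boolAbstraction, Set.preimage] using hS k

theorem measurableSet_setOf_boolAbstraction [MeasurableSpace α] [Finite K] {S : K → Set α}
    (hS : ∀ k, MeasurableSet (S k)) (p : (K → Bool) → Prop) :
    MeasurableSet {x | p (boolAbstraction S x)} :=
  measurable_boolAbstraction hS (Set.toFinite {c | p c}).measurableSet

theorem prod_ite_indicator_eq_boole {M : Type*} [CommMonoidWithZero M] [Fintype K]
    (S : K → Set α) (c : K → Bool) (x : α) :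
    ∏ k, (if c k then (S k).indicator (1 : α → M) x else (S k)ᶜ.indicator 1 x) =
      if boolAbstraction S x = c then 1 else 0 := by
  classical
  have hfactor : ∀ k, (if c k then (S k).indicator (1 : α → M) x else (S k)ᶜ.indicator 1 x) =
      if boolAbstraction S x k = c k then 1 else 0 := by
    intro k
    by_cases hx : x ∈ S k <;> cases c k <;> simp [boolAbstraction, hx]
  simp only [hfactor, Fintype.prod_boole, funext_iff]

end

theorem sum_filter_mul_boole_eq {β γ M : Type*} [Fintype β] [Fintype γ] [DecidableEq γ]
    [NonAssocSemiring M] (φ : β → γ → Bool) (W : β → M) (c₀ : γ) :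
    ∑ bc ∈ univ.filter (fun bc : β × γ => φ bc.1 bc.2 = true),
        W bc.1 * (if c₀ = bc.2 then 1 else 0) =
      ∑ b, if φ b c₀ = true then W b else 0 := by
  rw [sum_filter, Fintype.sum_prod_type]
  refine sum_congr rfl fun b _ => ?_
  rw [Fintype.sum_eq_single c₀ fun c hc => by simp [Ne.symm hc]]
  simp

noncomputable def algebraicModelCount {α β K M : Type*} [Fintype β] [Fintype K] [DecidableEq K]
    [CommSemiring M] (φ : β → (K → Bool) → Bool) (W : β → M) (S : K → Set α) (x : α) : M :=
  ∑ bc ∈ univ.filter (fun bc : β × (K → Bool) => φ bc.1 bc.2 = true),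
    W bc.1 * ∏ k, (if bc.2 k then (S k).indicator (1 : α → M) x else (S k)ᶜ.indicator 1 x)

section

variable {α β K : Type*} [Fintype β] [Fintype K] [DecidableEq K]

theorem algebraicModelCount_eq_sum_boole {M : Type*} [CommSemiring M]
    (φ : β → (K → Bool) → Bool) (W : β → M) (S : K → Set α) (x : α) :
    algebraicModelCount φ W S x = ∑ b, if φ b (boolAbstraction S x) = true then W b else 0 := by
  simp only [algebraicModelCount, prod_ite_indicator_eq_boole, sum_filter_mul_boole_eq]

theorem lintegral_algebraicModelCount_mul [MeasurableSpace α] (μ : Measure α)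
    (φ : β → (K → Bool) → Bool) {S : K → Set α} (hS : ∀ k, MeasurableSet (S k))
    (W : β → ℝ≥0∞) {g : α → ℝ≥0∞} (hg : Measurable g) :
    ∫⁻ x, algebraicModelCount φ W S x * g x ∂μ =
      ∑ b, ∫⁻ x in {x | φ b (boolAbstraction S x) = true}, W b * g x ∂μ := by
  have hA : ∀ b, MeasurableSet {x | φ b (boolAbstraction S x) = true} := fun b =>
    measurableSet_setOf_boolAbstraction hS (fun c => φ b c = true)
  have hpointwise : ∀ x, algebraicModelCount φ W S x * g x =
      ∑ b, {x | φ b (boolAbstraction S x) = true}.indicator (fun x => W b * g x) x := by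
    intro x
    rw [algebraicModelCount_eq_sum_boole, sum_mul]
    refine sum_congr rfl fun b _ => ?_
    by_cases h : φ b (boolAbstraction S x) = true <;> simp [Set.indicator, h]
  rw [lintegral_congr hpointwise,
    lintegral_finsetSum _ fun b _ => ((hg.const_mul (W b)).indicator (hA b))]
  exact sum_congr rfl fun b _ => lintegral_indicator (hA b) _

end

open Classical in
/-- The Lebesgue integral of the algebraic model count `Ψ` multiplied by the
product of the densities equals the weighted model integral. -/
theorem lintegral_amc_eq_wmi {J K : Type*} [Fintype J] [Fintype K]
    [DecidableEq J] [DecidableEq K] {N : ℕ}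
    (φ : (J → Bool) → (K → Bool) → Bool)
    (S : K → Set (Fin N → ℝ)) (hS : ∀ k, MeasurableSet (S k))
    (w : J → Bool → ℝ≥0∞)
    (f : Fin N → ℝ → ℝ≥0∞) (hf : ∀ i, Measurable (f i)) :
    (∫⁻ x : Fin N → ℝ,
        (∑ bc ∈ Finset.univ.filter
            (fun bc : (J → Bool) × (K → Bool) => φ bc.1 bc.2 = true),
          (∏ j : J, w j (bc.1 j)) *
            ∏ k : K, (if bc.2 k then (S k).indicator (1 : (Fin N → ℝ) → ℝ≥0∞) x
              else (S k)ᶜ.indicator (1 : (Fin N → ℝ) → ℝ≥0∞) x)) *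
          ∏ i : Fin N, f i (x i) ∂volume) =
    ∑ b : J → Bool,
      ∫⁻ x in {x : Fin N → ℝ | φ b (fun k => decide (x ∈ S k)) = true},
        (∏ j : J, w j (b j)) * ∏ i : Fin N, f i (x i) ∂volume := by
  have hdensity : Measurable fun x : Fin N → ℝ => ∏ i, f i (x i) := by fun_prop
  exact lintegral_algebraicModelCount_mul volume φ hS (fun b => ∏ j, w j (b j)) hdensity
end
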